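/- The kernel obtained from S²_{4/1} with a₀₁ = -1, a₀₂ = -4, namely K(t) = (1 - |t|)(1 + |t| - 3t²) for 0 ≤ |t| < 1, K(t) = (2 - |t|)(1 - |t|)² for 1 ≤ |t| < 2, K(t) = 0 for |t| ≥ 2, has approximation order 2: Σ_{i∈ℤ} K(t - i) = 1 and Σ_{i∈ℤ} (t - i)K(t - i) = 0 for all real t. -/

import Mathlib

/-!
Since `K` vanishes outside `(-2, 2)`, at a point `t` only the translates with
`i = ⌊t⌋ - 1, …, ⌊t⌋ + 2` contribute; in `s = Int.fract t` they are explicit cubics, and both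
sums collapse to polynomial identities in `s`.
-/

noncomputable def K (t : ℝ) : ℝ :=
  if |t| < 1 then (1 - |t|) * (1 + |t| - 3 * t ^ 2)
  else if |t| < 2 then (2 - |t|) * (1 - |t|) ^ 2
  else 0

lemma K_eq_zero_of_two_le_abs {x : ℝ} (hx : 2 ≤ |x|) : K x = 0 := by
  rw [K, if_neg (by linarith), if_neg (by linarith)]

lemma K_eq_of_abs_le_one {x : ℝ} (hx : |x| ≤ 1) : K x = (1 - |x|) * (1 + |x| - 3 * x ^ 2) := by
  rcases hx.lt_or_eq with hx | hx
  · rw [K, if_pos hx]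
  · rw [K, if_neg hx.not_lt, if_pos (by linarith), hx]
    ring

lemma K_eq_of_one_le_abs_of_abs_le_two {x : ℝ} (h₁ : 1 ≤ |x|) (h₂ : |x| ≤ 2) :
    K x = (2 - |x|) * (1 - |x|) ^ 2 := by
  rcases h₂.lt_or_eq with h₂ | h₂
  · rw [K, if_neg h₁.not_gt, if_pos h₂]
  · rw [K_eq_zero_of_two_le_abs h₂.ge, h₂]
    ring

lemma K_translates_of_mem_Ico {s : ℝ} (h₀ : 0 ≤ s) (h₁ : s < 1) :
    K (s + 1) = (1 - s) * s ^ 2 ∧ K s = (1 - s) * (1 + s - 3 * s ^ 2) ∧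
    K (s - 1) = s * (2 - s - 3 * (s - 1) ^ 2) ∧ K (s - 2) = s * (s - 1) ^ 2 := by
  have e₁ : |s + 1| = s + 1 := abs_of_nonneg (by linarith)
  have e₂ : |s| = s := abs_of_nonneg h₀
  have e₃ : |s - 1| = 1 - s := by rw [abs_of_nonpos (by linarith)]; ring
  have e₄ : |s - 2| = 2 - s := by rw [abs_of_nonpos (by linarith)]; ring
  refine ⟨?_, ?_, ?_, ?_⟩
  · rw [K_eq_of_one_le_abs_of_abs_le_two (by linarith) (by linarith), e₁]; ring
  · rw [K_eq_of_abs_le_one (by linarith), e₂]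
  · rw [K_eq_of_abs_le_one (by linarith), e₃]; ring
  · rw [K_eq_of_one_le_abs_of_abs_le_two (by linarith) (by linarith), e₄]; ring

lemma tsum_int_sub_eq_of_eq_zero_of_two_le_abs {M : Type*} [AddCommMonoid M] [TopologicalSpace M]
    {f : ℝ → M} (hf : ∀ x, 2 ≤ |x| → f x = 0) (t : ℝ) :
    ∑' i : ℤ, f (t - i) =
      f (Int.fract t + 1) + f (Int.fract t) + f (Int.fract t - 1) + f (Int.fract t - 2) := by
  have h₀ := Int.fract_nonneg t
  have h₁ := Int.fract_lt_one t
  have hshift : ∀ j : ℤ, t - ↑(⌊t⌋ + j) = Int.fract t - j := fun j => by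
    rw [Int.fract]; push_cast; ring
  rw [← (Equiv.addLeft ⌊t⌋).tsum_eq]
  simp only [Equiv.coe_addLeft, hshift]
  rw [tsum_eq_sum (s := {-1, 0, 1, 2})]
  · simp [add_assoc]
  · intro j hj
    simp only [Finset.mem_insert, Finset.mem_singleton, not_or] at hj
    apply hf
    rcases (by omega : j ≤ -2 ∨ 3 ≤ j) with hj | hj
    · have : (j : ℝ) ≤ -2 := by exact_mod_cast hj
      rw [abs_of_nonneg (by linarith)]; linarith
    · have : (3 : ℝ) ≤ j := by exact_mod_cast hj
      rw [abs_of_nonpos (by linarith)]; linarith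

theorem K_approx_order_two :
    (∀ t : ℝ, ∑' i : ℤ, K (t - i) = 1) ∧
    (∀ t : ℝ, ∑' i : ℤ, (t - i) * K (t - i) = 0) := by
  constructor
  · intro t
    rw [tsum_int_sub_eq_of_eq_zero_of_two_le_abs (fun _ hx => K_eq_zero_of_two_le_abs hx)]
    obtain ⟨h₁, h₂, h₃, h₄⟩ := K_translates_of_mem_Ico (Int.fract_nonneg t) (Int.fract_lt_one t)
    rw [h₁, h₂, h₃, h₄]
    ring
  · intro t
    rw [tsum_int_sub_eq_of_eq_zero_of_two_le_abs (f := fun x => x * K x)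
      (fun _ hx => by rw [K_eq_zero_of_two_le_abs hx, mul_zero])]
    obtain ⟨h₁, h₂, h₃, h₄⟩ := K_translates_of_mem_Ico (Int.fract_nonneg t) (Int.fract_lt_one t)
    rw [h₁, h₂, h₃, h₄]
    ring
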